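/- arXiv:1211.0949 — 2 statements merged into one kernel-verified Lean document; each statement's English description precedes it below -/
import Mathlib

section
/- Let f : [0,T) × [0,1] → ℝⁿ be a smooth solution, with f(t,·) regular for each t, of ∂ₜf = −∇ₛ²κ − ½|κ|²κ + λκ satisfying for all t the boundary conditions f(t,0) = f₋, f(t,1) = f₊ and κ(t,x) = ζ − ⟨ζ, τ(t,x)⟩τ(t,x) for x ∈ {0,1}. Then for all t, (d/dt) W_λ(f(t,·)) = −∫_I |∂ₜf|² ds ≤ 0; in particular the Willmore–Helfrich energy is non-increasing along the flow. -/
open scoped RealInnerProductSpace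
open MeasureTheory

noncomputable section

abbrev En (n : ℕ) := EuclideanSpace ℝ (Fin n)

variable {n : ℕ}

/-- Arc-length derivative along `f`. -/
def aD (f g : ℝ → En n) : ℝ → En n := fun x => ‖deriv f x‖⁻¹ • deriv g x

/-- Iterated arc-length derivative. -/
def aDIter (f : ℝ → En n) : ℕ → (ℝ → En n) → ℝ → En n
  | 0, g => g
  | k + 1, g => aD f (aDIter f k g)

/-- Unit tangent vector. -/
def tang (f : ℝ → En n) : ℝ → En n := aD f f

/-- Curvature vector. -/
def curv (f : ℝ → En n) : ℝ → En n := aD f (tang f)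

/-- Normal component of the arc-length derivative of a vector field along `f`. -/
def nS (f g : ℝ → En n) : ℝ → En n :=
  fun x => aD f g x - ⟪aD f g x, tang f x⟫ • tang f x

/-- Iterated normal arc-length derivative. -/
def nSIter (f : ℝ → En n) : ℕ → (ℝ → En n) → ℝ → En n
  | 0, g => g
  | k + 1, g => nS f (nSIter f k g)

/-- Arc-length derivative of a scalar field along `f`. -/
def aDS (f : ℝ → En n) (g : ℝ → ℝ) : ℝ → ℝ := fun x => ‖deriv f x‖⁻¹ * deriv g x

/-- Length of the curve. -/
def len (f : ℝ → En n) : ℝ := ∫ x in (0:ℝ)..1, ‖deriv f x‖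

/-- Willmore–Helfrich energy. -/
def WH (lam : ℝ) (ζ : En n) (f : ℝ → En n) : ℝ :=
  (∫ x in (0:ℝ)..1, ((1/2) * ‖curv f x‖ ^ 2 - ⟪curv f x, ζ⟫) * ‖deriv f x‖) + lam * len f

/-- Time derivative of a time dependent field. -/
def pT (g : ℝ → ℝ → En n) : ℝ → ℝ → En n := fun t x => deriv (fun s => g s x) t

/-- Normal component (w.r.t. the curve `f t`) of the time derivative. -/
def nT (f g : ℝ → ℝ → En n) : ℝ → ℝ → En n :=
  fun t x => pT g t x - ⟪pT g t x, tang (f t) x⟫ • tang (f t) x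

/-- Normal arc-length derivative of a time dependent field. -/
def nSF (f g : ℝ → ℝ → En n) : ℝ → ℝ → En n := fun t => nS (f t) (g t)

/-- Tangential component of the velocity. -/
def tanComp (f : ℝ → ℝ → En n) : ℝ → ℝ → ℝ := fun t x => ⟪pT f t x, tang (f t) x⟫

/-- Normal velocity. -/
def normVel (f : ℝ → ℝ → En n) : ℝ → ℝ → En n :=
  fun t x => pT f t x - tanComp f t x • tang (f t) x

/-- Scale invariant `Lᵖ` norm of the `i`-th normal derivative of `g` along `f`. -/
def sN (f : ℝ → En n) (p : ℝ) (i : ℕ) (g : ℝ → En n) : ℝ :=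
  len f ^ ((i : ℝ) + 1 - 1/p) * (∫ x in (0:ℝ)..1, ‖nSIter f i g x‖ ^ p * ‖deriv f x‖) ^ (1/p)

/-- Scale invariant Sobolev-type norm. -/
def sNk (f : ℝ → En n) (k : ℕ) (g : ℝ → En n) : ℝ :=
  ∑ i ∈ Finset.range (k + 1), sN f 2 i g

/-!
Write `V = ∂ₜf` and `v = |∂ₓf|`. For any smooth family of regular curves, `∂ₜv = ⟨τ, ∂ₓV⟩`,
`∂ₜτ = ∇ₛV` and `∂ₜκ = -(∂ₜv / v) κ + v⁻¹ ∂ₓ∇ₛV`. When `V` is normal, as it is along the flow,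
`⟨τ, ∂ₓV⟩ = -v ⟨V, κ⟩`, and these combine to
`∂ₜ[(½|κ|² - ⟨κ, ζ⟩ + λ) v] = ∂ₓ[⟨∇ₛV, κ - ζ⟩ - ⟨V, ∇ₛκ⟩] + v ⟨V, ∇ₛ²κ + ½|κ|²κ - λκ⟩`,
whose last term is `-v |V|²` by the flow equation. Differentiating under the integral sign and
integrating the divergence term leaves only the boundary flux, which vanishes: `V = 0` at the
fixed ends, and there `κ - ζ = -⟨ζ, τ⟩τ` is tangential while `∇ₛV` is normal.
-/

open Set Filter Topology
open scoped ContDiff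

section PartialDeriv

variable {E : Type*} [NormedAddCommGroup E] [NormedSpace ℝ E] {g h : ℝ × ℝ → E}
  {z : ℝ × ℝ} {c : E}

def Dx (g : ℝ × ℝ → E) (z : ℝ × ℝ) : E := fderiv ℝ g z (0, 1)

def Dt (g : ℝ × ℝ → E) (z : ℝ × ℝ) : E := fderiv ℝ g z (1, 0)

theorem DifferentiableAt.hasDerivAt_Dx (hg : DifferentiableAt ℝ g z) :
    HasDerivAt (fun y => g (z.1, y)) (Dx g z) z.2 :=
  hg.hasFDerivAt.comp_hasDerivAt z.2 ((hasDerivAt_const _ _).prodMk (hasDerivAt_id _))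

theorem DifferentiableAt.hasDerivAt_Dt (hg : DifferentiableAt ℝ g z) :
    HasDerivAt (fun u => g (u, z.2)) (Dt g z) z.1 :=
  hg.hasFDerivAt.comp_hasDerivAt z.1 ((hasDerivAt_id _).prodMk (hasDerivAt_const _ _))

theorem Dx_eq_of_hasDerivAt (hg : DifferentiableAt ℝ g z)
    (h : HasDerivAt (fun y => g (z.1, y)) c z.2) : Dx g z = c :=
  hg.hasDerivAt_Dx.unique h

theorem Dt_eq_of_hasDerivAt (hg : DifferentiableAt ℝ g z)
    (h : HasDerivAt (fun u => g (u, z.2)) c z.1) : Dt g z = c :=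
  hg.hasDerivAt_Dt.unique h

theorem Filter.EventuallyEq.Dx_eq (hgh : g =ᶠ[𝓝 z] h) : Dx g z = Dx h z := by
  rw [Dx, Dx, hgh.fderiv_eq]

theorem ContDiffAt.Dx_Dt_comm (hg : ContDiffAt ℝ 2 g z) : Dx (Dt g) z = Dt (Dx g) z := by
  have hg' : DifferentiableAt ℝ (fderiv ℝ g) z :=
    (hg.fderiv_right (m := 1) le_rfl).differentiableAt one_ne_zero
  have hcomm := hg.isSymmSndFDerivAt (by simp) (0, 1) (1, 0)
  change fderiv ℝ (fun w => fderiv ℝ g w (1, 0)) z (0, 1)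
    = fderiv ℝ (fun w => fderiv ℝ g w (0, 1)) z (1, 0)
  simpa [fderiv_clm_apply hg' (differentiableAt_const _)] using hcomm

theorem ContDiffOn.Dx {U : Set (ℝ × ℝ)} {m n : WithTop ℕ∞} (hg : ContDiffOn ℝ n g U)
    (hU : IsOpen U) (hmn : m + 1 ≤ n) : ContDiffOn ℝ m (Dx g) U :=
  (hg.fderiv_of_isOpen hU hmn).clm_apply contDiffOn_const

theorem ContDiffOn.Dt {U : Set (ℝ × ℝ)} {m n : WithTop ℕ∞} (hg : ContDiffOn ℝ n g U)
    (hU : IsOpen U) (hmn : m + 1 ≤ n) : ContDiffOn ℝ m (Dt g) U :=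
  (hg.fderiv_of_isOpen hU hmn).clm_apply contDiffOn_const

theorem ContDiff.Dx {m n : WithTop ℕ∞} (hg : ContDiff ℝ n g) (hmn : m + 1 ≤ n) :
    ContDiff ℝ m (Dx g) :=
  (hg.fderiv_right hmn).clm_apply contDiff_const

theorem ContDiff.Dt {m n : WithTop ℕ∞} (hg : ContDiff ℝ n g) (hmn : m + 1 ≤ n) :
    ContDiff ℝ m (Dt g) :=
  (hg.fderiv_right hmn).clm_apply contDiff_const

end PartialDeriv

theorem HasDerivAt.eq_zero_of_eqOn_const {E : Type*} [NormedAddCommGroup E] [NormedSpace ℝ E]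
    {h : ℝ → E} {d c : E} {s : Set ℝ} {x : ℝ} (hd : HasDerivAt h d x)
    (hs : UniqueDiffWithinAt ℝ s x) (hx : x ∈ s) (hc : EqOn h (fun _ => c) s) : d = 0 :=
  hs.eq_deriv s hd.hasDerivWithinAt ((hasDerivWithinAt_const x s c).congr hc (hc hx))

theorem Dt_eq_zero_of_eqOn {E : Type*} [NormedAddCommGroup E] [NormedSpace ℝ E]
    {g : ℝ × ℝ → E} {c : E} {s : Set ℝ} {t x : ℝ} (hg : DifferentiableAt ℝ g (t, x))
    (hs : UniqueDiffWithinAt ℝ s t) (ht : t ∈ s) (hc : ∀ u ∈ s, g (u, x) = c) :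
    Dt g (t, x) = 0 :=
  hg.hasDerivAt_Dt.eq_zero_of_eqOn_const hs ht hc

section InnerProduct

variable {E : Type*} [NormedAddCommGroup E] [InnerProductSpace ℝ E]

theorem HasDerivAt.norm {h : ℝ → E} {d : E} {x : ℝ} (hd : HasDerivAt h d x) (hx : h x ≠ 0) :
    HasDerivAt (fun y => ‖h y‖) (⟪h x, d⟫ / ‖h x‖) x := by
  have hpos : 0 < ‖h x‖ ^ 2 := by positivity
  have hsqrt := hd.norm_sq.sqrt hpos.ne'
  simp only [Real.sqrt_sq (norm_nonneg _)] at hsqrt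
  convert hsqrt using 1
  field_simp

def normalPart (τ a : E) : E := a - ⟪a, τ⟫ • τ

theorem inner_normalPart_self {τ : E} (hτ : ‖τ‖ = 1) (a : E) : ⟪normalPart τ a, τ⟫ = 0 := by
  simp [normalPart, inner_sub_left, real_inner_smul_left, hτ]

theorem inner_normalPart_of_inner_eq_zero {τ u : E} (hu : ⟪u, τ⟫ = 0) (a : E) :
    ⟪u, normalPart τ a⟫ = ⟪u, a⟫ := by
  simp [normalPart, inner_sub_right, real_inner_smul_right, hu]

theorem ContDiffOn.normalPart {G : Type*} [NormedAddCommGroup G] [NormedSpace ℝ G]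
    {n : WithTop ℕ∞} {U : Set G} {τ a : G → E} (hτ : ContDiffOn ℝ n τ U)
    (ha : ContDiffOn ℝ n a U) : ContDiffOn ℝ n (fun z => normalPart (τ z) (a z)) U :=
  ha.sub ((ha.inner ℝ hτ).smul hτ)

end InnerProduct

theorem ContinuousOn.continuousOn_slice {X : Type*} [TopologicalSpace X] {g : ℝ × ℝ → X}
    {U : Set (ℝ × ℝ)} {K : Set ℝ} {s : ℝ} (hg : ContinuousOn g U) (hs : ∀ x ∈ K, (s, x) ∈ U) :
    ContinuousOn (fun x => g (s, x)) K :=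
  hg.comp (continuous_const.prodMk continuous_id).continuousOn hs

section ParametricIntegral

variable {E : Type*} [NormedAddCommGroup E] [NormedSpace ℝ E] {g : ℝ × ℝ → E}
  {U : Set (ℝ × ℝ)} {t a b : ℝ}

theorem eventually_forall_prodMk_mem {K : Set ℝ} (hU : IsOpen U) (hK : IsCompact K)
    (ht : ∀ x ∈ K, (t, x) ∈ U) : ∀ᶠ s in 𝓝 t, ∀ x ∈ K, (s, x) ∈ U :=
  hK.eventually_forall_of_forall_eventually fun x hx => hU.mem_nhds (ht x hx)

theorem hasDerivAt_intervalIntegral_of_contDiffOn (hg : ContDiffOn ℝ 1 g U) (hU : IsOpen U)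
    (ht : ∀ x ∈ uIcc a b, (t, x) ∈ U) :
    HasDerivAt (fun s => ∫ x in a..b, g (s, x)) (∫ x in a..b, Dt g (t, x)) t := by
  obtain ⟨ε, hε, hεU⟩ : ∃ ε > 0, ∀ s, dist s t < ε → ∀ x ∈ uIcc a b, (s, x) ∈ U :=
    Metric.eventually_nhds_iff.mp (eventually_forall_prodMk_mem hU isCompact_uIcc ht)
  have hball : ∀ s ∈ Metric.closedBall t (ε / 2), ∀ x ∈ uIcc a b, (s, x) ∈ U :=
    fun s hs => hεU s (by rw [Metric.mem_closedBall] at hs; linarith)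
  have hDt : ContinuousOn (Dt g) U := (hg.Dt (m := 0) hU le_rfl).continuousOn
  obtain ⟨M, hM⟩ := ((isCompact_closedBall t (ε / 2)).prod
    isCompact_uIcc).exists_bound_of_continuousOn (hDt.mono fun z hz => hball z.1 hz.1 z.2 hz.2)
  have hIoc : ∀ x ∈ uIoc a b, x ∈ uIcc a b := fun _ hx => uIoc_subset_uIcc hx
  have hsub : Metric.ball t (ε / 2) ⊆ Metric.closedBall t (ε / 2) :=
    Metric.ball_subset_closedBall
  refine (intervalIntegral.hasDerivAt_integral_of_dominated_loc_of_deriv_le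
    (F := fun s x => g (s, x)) (F' := fun s x => Dt g (s, x)) (bound := fun _ => M)
    (Metric.ball_mem_nhds t (half_pos hε)) ?_ ?_ ?_ ?_ intervalIntegrable_const ?_).2
  · filter_upwards [Metric.ball_mem_nhds t (half_pos hε)] with s hs
    exact (hg.continuousOn.continuousOn_slice fun x hx => hball s (hsub hs) x (hIoc x hx))
      |>.aestronglyMeasurable measurableSet_uIoc
  · exact (hg.continuousOn.continuousOn_slice
      fun x hx => hball t (Metric.mem_closedBall_self (half_pos hε).le) x hx).intervalIntegrable
  · exact (hDt.continuousOn_slice fun x hx =>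
      hball t (Metric.mem_closedBall_self (half_pos hε).le) x (hIoc x hx)).aestronglyMeasurable
      measurableSet_uIoc
  · exact Eventually.of_forall fun x hx s hs => hM (s, x) ⟨hsub hs, hIoc x hx⟩
  · refine Eventually.of_forall fun x hx s hs => ?_
    have hsx := hball s (hsub hs) x (hIoc x hx)
    exact ((hg.contDiffAt (hU.mem_nhds hsx)).differentiableAt one_ne_zero).hasDerivAt_Dt

theorem integral_Dx_eq_sub [CompleteSpace E] (hg : ContDiffOn ℝ 1 g U) (hU : IsOpen U)
    (ht : ∀ x ∈ uIcc a b, (t, x) ∈ U) :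
    ∫ x in a..b, Dx g (t, x) = g (t, b) - g (t, a) :=
  intervalIntegral.integral_eq_sub_of_hasDerivAt (f := fun y => g (t, y))
    (fun x hx =>
      ((hg.contDiffAt (hU.mem_nhds (ht x hx))).differentiableAt one_ne_zero).hasDerivAt_Dx)
    ((hg.Dx (m := 0) hU le_rfl).continuousOn.continuousOn_slice ht).intervalIntegrable

end ParametricIntegral

section CurveFamily

variable {E : Type*} [NormedAddCommGroup E] [InnerProductSpace ℝ E] {F g : ℝ × ℝ → E}
  {z : ℝ × ℝ}

def regularSet (F : ℝ × ℝ → E) : Set (ℝ × ℝ) := {z | Dx F z ≠ 0}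

def speed (F : ℝ × ℝ → E) (z : ℝ × ℝ) : ℝ := ‖Dx F z‖

def tangent (F : ℝ × ℝ → E) (z : ℝ × ℝ) : E := (speed F z)⁻¹ • Dx F z

/-- The normal arc-length derivative `∇ₛ g` along the curve `F (t, ·)`. -/
def normalDx (F g : ℝ × ℝ → E) (z : ℝ × ℝ) : E :=
  normalPart (tangent F z) ((speed F z)⁻¹ • Dx g z)

def curvature (F : ℝ × ℝ → E) (z : ℝ × ℝ) : E := (speed F z)⁻¹ • Dx (tangent F) z

def energyDensity (lam : ℝ) (ζ : E) (F : ℝ × ℝ → E) (z : ℝ × ℝ) : ℝ :=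
  ((1 / 2) * ‖curvature F z‖ ^ 2 - ⟪curvature F z, ζ⟫ + lam) * speed F z

def boundaryFlux (ζ : E) (F : ℝ × ℝ → E) (z : ℝ × ℝ) : ℝ :=
  ⟪normalDx F (Dt F) z, curvature F z - ζ⟫ - ⟪Dt F z, normalDx F (curvature F) z⟫

def IsHelfrichFlowAt (lam : ℝ) (F : ℝ × ℝ → E) (z : ℝ × ℝ) : Prop :=
  Dt F z = -normalDx F (normalDx F (curvature F)) z
    - ((1 / 2) * ‖curvature F z‖ ^ 2) • curvature F z + lam • curvature F z

theorem isOpen_regularSet (hF : ContDiff ℝ ∞ F) : IsOpen (regularSet F) :=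
  isOpen_compl_singleton.preimage (hF.Dx (m := 0) (by simp)).continuous

theorem ContDiffOn.differentiableAt_of_mem_regularSet {G : Type*} [NormedAddCommGroup G]
    [NormedSpace ℝ G] {h : ℝ × ℝ → G} (hF : ContDiff ℝ ∞ F)
    (hh : ContDiffOn ℝ ∞ h (regularSet F)) (hz : z ∈ regularSet F) : DifferentiableAt ℝ h z :=
  (hh.contDiffAt ((isOpen_regularSet hF).mem_nhds hz)).differentiableAt (by simp)

theorem speed_ne_zero (hz : z ∈ regularSet F) : speed F z ≠ 0 := norm_ne_zero_iff.mpr hz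

theorem norm_tangent (hz : z ∈ regularSet F) : ‖tangent F z‖ = 1 := by
  have hv : ‖Dx F z‖ ≠ 0 := speed_ne_zero hz
  simp [tangent, speed, norm_smul, hv]

theorem speed_smul_tangent (hz : z ∈ regularSet F) : speed F z • tangent F z = Dx F z := by
  rw [tangent, smul_inv_smul₀ (speed_ne_zero hz)]

theorem speed_smul_curvature (hz : z ∈ regularSet F) :
    speed F z • curvature F z = Dx (tangent F) z := by
  rw [curvature, smul_inv_smul₀ (speed_ne_zero hz)]

theorem inner_normalDx_tangent (hz : z ∈ regularSet F) (g : ℝ × ℝ → E) :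
    ⟪normalDx F g z, tangent F z⟫ = 0 :=
  inner_normalPart_self (norm_tangent hz) _

theorem inner_Dx_eq_speed_mul_inner_normalDx {u : E} (hz : z ∈ regularSet F)
    (hu : ⟪u, tangent F z⟫ = 0) (g : ℝ × ℝ → E) :
    ⟪u, Dx g z⟫ = speed F z * ⟪u, normalDx F g z⟫ := by
  rw [normalDx, inner_normalPart_of_inner_eq_zero hu, real_inner_smul_right,
    mul_inv_cancel_left₀ (speed_ne_zero hz)]

theorem boundaryFlux_eq_zero {ζ : E} (hz : z ∈ regularSet F) (hV : Dt F z = 0)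
    (hκ : curvature F z = ζ - ⟪ζ, tangent F z⟫ • tangent F z) : boundaryFlux ζ F z = 0 := by
  rw [boundaryFlux, hV, inner_zero_left, sub_zero, hκ, sub_sub_cancel_left, inner_neg_right,
    real_inner_smul_right, inner_normalDx_tangent hz, mul_zero, neg_zero]

variable (hF : ContDiff ℝ ∞ F)
include hF

theorem contDiffOn_speed : ContDiffOn ℝ ∞ (speed F) (regularSet F) :=
  (hF.Dx (by simp)).contDiffOn.norm ℝ fun _ hz => hz

theorem contDiffOn_tangent : ContDiffOn ℝ ∞ (tangent F) (regularSet F) :=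
  ((contDiffOn_speed hF).inv fun _ hz => speed_ne_zero hz).smul (hF.Dx (by simp)).contDiffOn

theorem ContDiffOn.normalDx (hg : ContDiffOn ℝ ∞ g (regularSet F)) :
    ContDiffOn ℝ ∞ (normalDx F g) (regularSet F) :=
  (contDiffOn_tangent hF).normalPart
    (((contDiffOn_speed hF).inv fun _ hz => speed_ne_zero hz).smul
      (hg.Dx (isOpen_regularSet hF) (by simp)))

theorem contDiffOn_curvature : ContDiffOn ℝ ∞ (curvature F) (regularSet F) :=
  ((contDiffOn_speed hF).inv fun _ hz => speed_ne_zero hz).smul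
    ((contDiffOn_tangent hF).Dx (isOpen_regularSet hF) (by simp))

theorem contDiffOn_energyDensity (lam : ℝ) (ζ : E) :
    ContDiffOn ℝ ∞ (energyDensity lam ζ F) (regularSet F) := by
  have hκ := contDiffOn_curvature hF
  exact (((contDiffOn_const.mul (hκ.norm_sq ℝ)).sub (hκ.inner ℝ contDiffOn_const)).add
    contDiffOn_const).mul (contDiffOn_speed hF)

theorem contDiffOn_boundaryFlux (ζ : E) :
    ContDiffOn ℝ ∞ (boundaryFlux ζ F) (regularSet F) := by
  have hV : ContDiffOn ℝ ∞ (Dt F) (regularSet F) := (hF.Dt (by simp)).contDiffOn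
  have hκ := contDiffOn_curvature hF
  exact ((hV.normalDx hF).inner ℝ (hκ.sub contDiffOn_const)).sub
    (hV.inner ℝ (hκ.normalDx hF))

theorem inner_tangent_curvature (hz : z ∈ regularSet F) :
    ⟪tangent F z, curvature F z⟫ = 0 := by
  have hτ := ((contDiffOn_tangent hF).differentiableAt_of_mem_regularSet hF hz).hasDerivAt_Dx
  have hs : IsOpen {y | (z.1, y) ∈ regularSet F} :=
    (isOpen_regularSet hF).preimage (continuous_const.prodMk continuous_id)
  have h := hτ.norm_sq.eq_zero_of_eqOn_const (c := 1) (hs.uniqueDiffWithinAt hz) hz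
    fun y hy => by simp [norm_tangent hy]
  rw [← speed_smul_curvature hz, real_inner_smul_right] at h
  simpa [speed_ne_zero hz] using h

theorem Dt_Dx_comm (z : ℝ × ℝ) : Dt (Dx F) z = Dx (Dt F) z :=
  (hF.contDiffAt.of_le ENat.LEInfty.out).Dx_Dt_comm.symm

theorem hasDerivAt_Dx_time (z : ℝ × ℝ) :
    HasDerivAt (fun u => Dx F (u, z.2)) (Dx (Dt F) z) z.1 := by
  rw [← Dt_Dx_comm hF]
  exact ((hF.Dx (m := ∞) (by simp)).differentiable (by simp) z).hasDerivAt_Dt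

theorem hasDerivAt_speed_time (hz : z ∈ regularSet F) :
    HasDerivAt (fun u => speed F (u, z.2)) ⟪tangent F z, Dx (Dt F) z⟫ z.1 := by
  refine ((hasDerivAt_Dx_time hF z).norm hz).congr_deriv ?_
  rw [tangent, real_inner_smul_left, speed, div_eq_inv_mul]

theorem hasDerivAt_tangent_time (hz : z ∈ regularSet F) :
    HasDerivAt (fun u => tangent F (u, z.2)) (normalDx F (Dt F) z) z.1 := by
  refine (((hasDerivAt_speed_time hF hz).inv (speed_ne_zero hz)).smul
    (hasDerivAt_Dx_time hF z)).congr_deriv ?_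
  rw [normalDx, normalPart, ← speed_smul_tangent hz, real_inner_smul_left, smul_smul,
    real_inner_comm, sub_eq_add_neg, ← neg_smul]
  congr 2
  field_simp [speed_ne_zero hz]

theorem Dt_tangent (hz : z ∈ regularSet F) : Dt (tangent F) z = normalDx F (Dt F) z :=
  Dt_eq_of_hasDerivAt ((contDiffOn_tangent hF).differentiableAt_of_mem_regularSet hF hz)
    (hasDerivAt_tangent_time hF hz)

theorem hasDerivAt_curvature_time (hz : z ∈ regularSet F) :
    HasDerivAt (fun u => curvature F (u, z.2))
      (-(⟪tangent F z, Dx (Dt F) z⟫ / speed F z) • curvature F z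
        + (speed F z)⁻¹ • Dx (normalDx F (Dt F)) z) z.1 := by
  have hU := isOpen_regularSet hF
  have hτ := contDiffOn_tangent hF
  have hDxτ :
      HasDerivAt (fun u => Dx (tangent F) (u, z.2)) (Dx (normalDx F (Dt F)) z) z.1 := by
    have h :=
      ((hτ.Dx hU (m := ∞) (by simp)).differentiableAt_of_mem_regularSet hF hz).hasDerivAt_Dt
    have hev : Dt (tangent F) =ᶠ[𝓝 z] normalDx F (Dt F) :=
      eventually_of_mem (hU.mem_nhds hz) fun w hw => Dt_tangent hF hw
    rwa [← ((hτ.contDiffAt (hU.mem_nhds hz)).of_le ENat.LEInfty.out).Dx_Dt_comm, hev.Dx_eq] at h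
  refine (((hasDerivAt_speed_time hF hz).inv (speed_ne_zero hz)).smul hDxτ).congr_deriv ?_
  rw [add_comm, ← speed_smul_curvature hz, smul_smul]
  congr 2
  field_simp [speed_ne_zero hz]

theorem Dt_energyDensity (lam : ℝ) (ζ : E) (hz : z ∈ regularSet F) :
    Dt (energyDensity lam ζ F) z = ⟪Dx (normalDx F (Dt F)) z, curvature F z - ζ⟫
      + ⟪tangent F z, Dx (Dt F) z⟫ * (lam - (1 / 2) * ‖curvature F z‖ ^ 2) := by
  have hκ := hasDerivAt_curvature_time hF hz
  have hG := (((hκ.norm_sq.const_mul (1 / 2)).sub (hκ.inner ℝ (hasDerivAt_const _ ζ))).add_const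
    lam).mul (hasDerivAt_speed_time hF hz)
  rw [Dt_eq_of_hasDerivAt
    ((contDiffOn_energyDensity hF lam ζ).differentiableAt_of_mem_regularSet hF hz) hG]
  have hv := speed_ne_zero hz
  simp only [inner_add_right, inner_add_left, inner_sub_right, real_inner_smul_left,
    real_inner_smul_right, inner_zero_right, real_inner_self_eq_norm_sq, Pi.sub_apply,
    Prod.mk.eta]
  rw [real_inner_comm (Dx (normalDx F (Dt F)) z) (curvature F z)]
  field_simp
  ring

theorem Dx_boundaryFlux (ζ : E) (hz : z ∈ regularSet F) (hV : ⟪Dt F z, tangent F z⟫ = 0) :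
    Dx (boundaryFlux ζ F) z = ⟪Dx (normalDx F (Dt F)) z, curvature F z - ζ⟫
      - speed F z * ⟪Dt F z, normalDx F (normalDx F (curvature F)) z⟫ := by
  have hU := isOpen_regularSet hF
  have hVs : ContDiffOn ℝ ∞ (Dt F) (regularSet F) := (hF.Dt (by simp)).contDiffOn
  have hκs := contDiffOn_curvature hF
  have hd {h : ℝ × ℝ → E} (hh : ContDiffOn ℝ ∞ h (regularSet F)) :=
    (hh.differentiableAt_of_mem_regularSet hF hz).hasDerivAt_Dx
  have hB := ((hd (hVs.normalDx hF)).inner ℝ ((hd hκs).sub_const ζ)).sub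
    ((hd hVs).inner ℝ (hd (hκs.normalDx hF)))
  rw [Dx_eq_of_hasDerivAt
    ((contDiffOn_boundaryFlux hF ζ).differentiableAt_of_mem_regularSet hF hz) hB]
  simp only [Prod.mk.eta]
  rw [inner_Dx_eq_speed_mul_inner_normalDx hz (inner_normalDx_tangent hz _),
    inner_Dx_eq_speed_mul_inner_normalDx hz hV,
    real_inner_comm (normalDx F (curvature F) z) (Dx (Dt F) z),
    inner_Dx_eq_speed_mul_inner_normalDx hz (inner_normalDx_tangent hz _),
    real_inner_comm (normalDx F (Dt F) z)]
  ring

theorem inner_tangent_Dx_Dt_of_normal {s : Set ℝ} {t x : ℝ} (hz : (t, x) ∈ regularSet F)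
    (hs : UniqueDiffWithinAt ℝ s x) (hx : x ∈ s)
    (hnormal : ∀ y ∈ s, ⟪Dt F (t, y), tangent F (t, y)⟫ = 0) :
    ⟪tangent F (t, x), Dx (Dt F) (t, x)⟫
      = -(speed F (t, x) * ⟪Dt F (t, x), curvature F (t, x)⟫) := by
  have hV := ((hF.Dt (m := ∞) (by simp)).differentiable (by simp) (t, x)).hasDerivAt_Dx
  have hτ := ((contDiffOn_tangent hF).differentiableAt_of_mem_regularSet hF hz).hasDerivAt_Dx
  have h := (hV.inner ℝ hτ).eq_zero_of_eqOn_const hs hx hnormal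
  rw [← speed_smul_curvature hz, real_inner_smul_right] at h
  linarith [real_inner_comm (tangent F (t, x)) (Dx (Dt F) (t, x)),
    real_inner_comm (Dt F (t, x)) (curvature F (t, x))]

theorem inner_Dt_tangent_of_isHelfrichFlowAt {lam : ℝ} (hz : z ∈ regularSet F)
    (hflow : IsHelfrichFlowAt lam F z) : ⟪Dt F z, tangent F z⟫ = 0 := by
  rw [hflow, inner_add_left, inner_sub_left, inner_neg_left, real_inner_smul_left,
    real_inner_smul_left, inner_normalDx_tangent hz, real_inner_comm (tangent F z),
    inner_tangent_curvature hF hz]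
  ring

theorem Dt_energyDensity_of_isHelfrichFlowAt {lam : ℝ} {ζ : E} {s : Set ℝ} {t x : ℝ}
    (hs : UniqueDiffWithinAt ℝ s x) (hx : x ∈ s) (hreg : ∀ y ∈ s, (t, y) ∈ regularSet F)
    (hflow : ∀ y ∈ s, IsHelfrichFlowAt lam F (t, y)) :
    Dt (energyDensity lam ζ F) (t, x)
      = Dx (boundaryFlux ζ F) (t, x) - ‖Dt F (t, x)‖ ^ 2 * speed F (t, x) := by
  have hnormal y (hy : y ∈ s) :=
    inner_Dt_tangent_of_isHelfrichFlowAt hF (hreg y hy) (hflow y hy)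
  have hμ := congrArg (⟪Dt F (t, x), ·⟫) (hflow x hx)
  simp only [inner_add_right, inner_sub_right, inner_neg_right, real_inner_smul_right,
    real_inner_self_eq_norm_sq] at hμ
  rw [Dt_energyDensity hF lam ζ (hreg x hx), Dx_boundaryFlux hF ζ (hreg x hx) (hnormal x hx),
    inner_tangent_Dx_Dt_of_normal hF (hreg x hx) hs hx hnormal]
  linear_combination (speed F (t, x)) * hμ

theorem integral_Dt_energyDensity_of_isHelfrichFlowAt {lam : ℝ} {ζ : E} {t a b : ℝ}
    (hab : a < b) (hreg : ∀ x ∈ Icc a b, (t, x) ∈ regularSet F)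
    (hflow : ∀ x ∈ Icc a b, IsHelfrichFlowAt lam F (t, x))
    (hVa : Dt F (t, a) = 0) (hVb : Dt F (t, b) = 0)
    (hκa : curvature F (t, a) = ζ - ⟪ζ, tangent F (t, a)⟫ • tangent F (t, a))
    (hκb : curvature F (t, b) = ζ - ⟪ζ, tangent F (t, b)⟫ • tangent F (t, b)) :
    ∫ x in a..b, Dt (energyDensity lam ζ F) (t, x)
      = -∫ x in a..b, ‖Dt F (t, x)‖ ^ 2 * speed F (t, x) := by
  have hU := isOpen_regularSet hF
  have hIcc : uIcc a b = Icc a b := uIcc_of_le hab.le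
  have hreg' : ∀ x ∈ uIcc a b, (t, x) ∈ regularSet F := hIcc ▸ hreg
  have hB := contDiffOn_boundaryFlux hF ζ
  have hDxB : IntervalIntegrable (fun x => Dx (boundaryFlux ζ F) (t, x)) volume a b :=
    ((hB.Dx (m := 0) hU (by simp)).continuousOn.continuousOn_slice hreg').intervalIntegrable
  have hdiss : IntervalIntegrable (fun x => ‖Dt F (t, x)‖ ^ 2 * speed F (t, x)) volume a b := by
    refine Continuous.intervalIntegrable ?_ a b
    have hslice {g : ℝ × ℝ → E} (hg : Continuous g) : Continuous fun x => g (t, x) :=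
      hg.comp (continuous_const.prodMk continuous_id)
    exact ((hslice (hF.Dt (m := 0) (by simp)).continuous).norm.pow 2).mul
      (hslice (hF.Dx (m := 0) (by simp)).continuous).norm
  calc ∫ x in a..b, Dt (energyDensity lam ζ F) (t, x)
      = ∫ x in a..b, (Dx (boundaryFlux ζ F) (t, x) - ‖Dt F (t, x)‖ ^ 2 * speed F (t, x)) := by
        refine intervalIntegral.integral_congr fun x hx => ?_
        rw [hIcc] at hx
        exact Dt_energyDensity_of_isHelfrichFlowAt hF (uniqueDiffOn_Icc hab x hx) hx hreg hflow
    _ = boundaryFlux ζ F (t, b) - boundaryFlux ζ F (t, a)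
        - ∫ x in a..b, ‖Dt F (t, x)‖ ^ 2 * speed F (t, x) := by
        rw [intervalIntegral.integral_sub hDxB hdiss,
          integral_Dx_eq_sub (hB.of_le (by simp)) hU hreg']
    _ = -∫ x in a..b, ‖Dt F (t, x)‖ ^ 2 * speed F (t, x) := by
        rw [boundaryFlux_eq_zero (hreg' b right_mem_uIcc) hVb hκb,
          boundaryFlux_eq_zero (hreg' a left_mem_uIcc) hVa hκa, sub_zero, zero_sub]

end CurveFamily

section TimeSlices

variable {f : ℝ → ℝ → En n}

theorem deriv_eq_Dx (hf : Differentiable ℝ (Function.uncurry f)) (s x : ℝ) :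
    deriv (f s) x = Dx (Function.uncurry f) (s, x) :=
  (hf (s, x)).hasDerivAt_Dx.deriv

theorem pT_eq_Dt (hf : Differentiable ℝ (Function.uncurry f)) (s x : ℝ) :
    pT f s x = Dt (Function.uncurry f) (s, x) :=
  (hf (s, x)).hasDerivAt_Dt.deriv

variable (hf : ContDiff ℝ ∞ (Function.uncurry f))
include hf

theorem aD_slice {G : ℝ × ℝ → En n} (hG : ContDiffOn ℝ ∞ G (regularSet (Function.uncurry f)))
    (s x : ℝ) :
    aD (f s) (fun y => G (s, y)) x = (speed (Function.uncurry f) (s, x))⁻¹ • Dx G (s, x) := by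
  rw [aD, deriv_eq_Dx (hf.differentiable (by simp))]
  by_cases hz : (s, x) ∈ regularSet (Function.uncurry f)
  · rw [(hG.differentiableAt_of_mem_regularSet hf hz).hasDerivAt_Dx.deriv, speed]
  · -- both sides vanish, as `‖0‖⁻¹ = 0`
    simp [speed, show Dx (Function.uncurry f) (s, x) = 0 from not_not.mp hz]

theorem tang_eq_tangent (s : ℝ) : tang (f s) = fun x => tangent (Function.uncurry f) (s, x) :=
  funext fun x => aD_slice hf hf.contDiffOn s x

theorem curv_eq_curvature (s : ℝ) :
    curv (f s) = fun x => curvature (Function.uncurry f) (s, x) := by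
  funext x
  rw [curv, tang_eq_tangent hf]
  exact aD_slice hf (contDiffOn_tangent hf) s x

theorem nS_slice {G : ℝ × ℝ → En n} (hG : ContDiffOn ℝ ∞ G (regularSet (Function.uncurry f)))
    (s : ℝ) : nS (f s) (fun y => G (s, y)) = fun x => normalDx (Function.uncurry f) G (s, x) := by
  funext x
  rw [nS, aD_slice hf hG, tang_eq_tangent hf]
  rfl

theorem nSIter_two_curv (s : ℝ) :
    nSIter (f s) 2 (curv (f s)) = fun x => normalDx (Function.uncurry f)
      (normalDx (Function.uncurry f) (curvature (Function.uncurry f))) (s, x) := by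
  rw [nSIter, nSIter, nSIter, curv_eq_curvature hf, nS_slice hf (contDiffOn_curvature hf),
    nS_slice hf ((contDiffOn_curvature hf).normalDx hf)]

theorem WH_eq_integral_energyDensity (lam : ℝ) (ζ : En n) {s : ℝ}
    (hreg : ∀ x ∈ Icc (0 : ℝ) 1, (s, x) ∈ regularSet (Function.uncurry f)) :
    WH lam ζ (f s) = ∫ x in (0 : ℝ)..1, energyDensity lam ζ (Function.uncurry f) (s, x) := by
  have hreg' : ∀ x ∈ uIcc (0 : ℝ) 1, (s, x) ∈ regularSet (Function.uncurry f) := by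
    rwa [uIcc_of_le zero_le_one]
  have hbending : IntervalIntegrable (fun x => energyDensity 0 ζ (Function.uncurry f) (s, x))
      volume 0 1 :=
    ((contDiffOn_energyDensity hf 0 ζ).continuousOn.continuousOn_slice hreg').intervalIntegrable
  have hlength : IntervalIntegrable (fun x => speed (Function.uncurry f) (s, x)) volume 0 1 :=
    (((hf.Dx (m := 0) (by simp)).continuous.comp
      (continuous_const.prodMk continuous_id)).norm).intervalIntegrable 0 1
  have hsplit : ∀ x, energyDensity lam ζ (Function.uncurry f) (s, x)
      = energyDensity 0 ζ (Function.uncurry f) (s, x)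
        + lam * speed (Function.uncurry f) (s, x) := fun x => by
    simp only [energyDensity]
    ring
  rw [intervalIntegral.integral_congr fun x _ => hsplit x,
    intervalIntegral.integral_add hbending (hlength.const_mul lam),
    intervalIntegral.integral_const_mul]
  simp only [WH, len, energyDensity, speed, add_zero, curv_eq_curvature hf,
    deriv_eq_Dx (hf.differentiable (by simp))]

theorem hasDerivAt_WH (lam : ℝ) (ζ : En n) {t : ℝ}
    (hreg : ∀ x ∈ Icc (0 : ℝ) 1, (t, x) ∈ regularSet (Function.uncurry f)) :
    HasDerivAt (fun s => WH lam ζ (f s))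
      (∫ x in (0 : ℝ)..1, Dt (energyDensity lam ζ (Function.uncurry f)) (t, x)) t := by
  have hU := isOpen_regularSet hf
  have hreg' : ∀ x ∈ uIcc (0 : ℝ) 1, (t, x) ∈ regularSet (Function.uncurry f) := by
    rwa [uIcc_of_le zero_le_one]
  refine (hasDerivAt_intervalIntegral_of_contDiffOn
    ((contDiffOn_energyDensity hf lam ζ).of_le (by simp)) hU hreg').congr_of_eventuallyEq ?_
  filter_upwards [eventually_forall_prodMk_mem hU isCompact_Icc hreg] with s hs
  exact WH_eq_integral_energyDensity hf lam ζ hs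

end TimeSlices

theorem energy_decreases_general (n : ℕ) (lam : ℝ)
    (ζ fminus fplus : En n)
    (T : ℝ)
    (f : ℝ → ℝ → En n)
    (hsmooth : ContDiff ℝ (⊤ : ℕ∞) (Function.uncurry f))
    (hreg : ∀ t ∈ Set.Ico (0:ℝ) T, ∀ x ∈ Set.Icc (0:ℝ) 1, deriv (f t) x ≠ 0)
    (hflow : ∀ t ∈ Set.Ico (0:ℝ) T, ∀ x ∈ Set.Icc (0:ℝ) 1,
      pT f t x = -nSIter (f t) 2 (curv (f t)) x
        - ((1/2) * ‖curv (f t) x‖ ^ 2) • curv (f t) x + lam • curv (f t) x)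
    (hbd₀ : ∀ t ∈ Set.Ico (0:ℝ) T, f t 0 = fminus)
    (hbd₁ : ∀ t ∈ Set.Ico (0:ℝ) T, f t 1 = fplus)
    (hnat : ∀ t ∈ Set.Ico (0:ℝ) T, ∀ x ∈ ({0, 1} : Set ℝ),
      curv (f t) x = ζ - ⟪ζ, tang (f t) x⟫ • tang (f t) x) :
    ∀ t ∈ Set.Ico (0:ℝ) T,
      HasDerivAt (fun s => WH lam ζ (f s))
        (-(∫ x in (0:ℝ)..1, ‖pT f t x‖ ^ 2 * ‖deriv (f t) x‖)) t ∧
      -(∫ x in (0:ℝ)..1, ‖pT f t x‖ ^ 2 * ‖deriv (f t) x‖) ≤ 0 := by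
  intro t ht
  set F := Function.uncurry f
  have hdiff : Differentiable ℝ F := hsmooth.differentiable (by simp)
  have hregF x (hx : x ∈ Icc (0 : ℝ) 1) : (t, x) ∈ regularSet F := by
    simpa [regularSet, deriv_eq_Dx hdiff] using hreg t ht x hx
  have hflowF x (hx : x ∈ Icc (0 : ℝ) 1) : IsHelfrichFlowAt lam F (t, x) := by
    have h := hflow t ht x hx
    rwa [pT_eq_Dt hdiff, nSIter_two_curv hsmooth, curv_eq_curvature hsmooth] at h
  have hfixed {x : ℝ} {c : En n} (hc : ∀ u ∈ Ico (0 : ℝ) T, f u x = c) : Dt F (t, x) = 0 :=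
    Dt_eq_zero_of_eqOn (hdiff _) (uniqueDiffOn_Ico 0 T t ht) ht hc
  have hnatF {x : ℝ} (hx : x ∈ ({0, 1} : Set ℝ)) :
      curvature F (t, x) = ζ - ⟪ζ, tangent F (t, x)⟫ • tangent F (t, x) := by
    simpa [curv_eq_curvature hsmooth, tang_eq_tangent hsmooth] using hnat t ht x hx
  refine ⟨?_, neg_nonpos.mpr <|
    intervalIntegral.integral_nonneg zero_le_one fun _ _ => by positivity⟩
  convert hasDerivAt_WH hsmooth lam ζ hregF using 1
  rw [integral_Dt_energyDensity_of_isHelfrichFlowAt hsmooth zero_lt_one hregF hflowF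
    (hfixed hbd₀) (hfixed hbd₁) (hnatF (by simp)) (hnatF (by simp))]
  simp only [pT_eq_Dt hdiff, deriv_eq_Dx hdiff, speed]
  rfl

/-- The Willmore–Helfrich energy is non-increasing along the flow with natural
boundary conditions: `(d/dt) W_λ(f(t)) = -∫ |∂ₜf|² ds ≤ 0`. -/
theorem energy_decreases (n : ℕ) (hn : 2 ≤ n) (lam : ℝ) (hlam : 0 ≤ lam)
    (ζ fminus fplus : En n)
    (T : ℝ) (hT : 0 < T)
    (f : ℝ → ℝ → En n)
    (hsmooth : ContDiff ℝ (⊤ : ℕ∞) (Function.uncurry f))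
    (hreg : ∀ t ∈ Set.Ico (0:ℝ) T, ∀ x ∈ Set.Icc (0:ℝ) 1, deriv (f t) x ≠ 0)
    (hflow : ∀ t ∈ Set.Ico (0:ℝ) T, ∀ x ∈ Set.Icc (0:ℝ) 1,
      pT f t x = -nSIter (f t) 2 (curv (f t)) x
        - ((1/2) * ‖curv (f t) x‖ ^ 2) • curv (f t) x + lam • curv (f t) x)
    (hbd₀ : ∀ t ∈ Set.Ico (0:ℝ) T, f t 0 = fminus)
    (hbd₁ : ∀ t ∈ Set.Ico (0:ℝ) T, f t 1 = fplus)
    (hnat : ∀ t ∈ Set.Ico (0:ℝ) T, ∀ x ∈ ({0, 1} : Set ℝ),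
      curv (f t) x = ζ - ⟪ζ, tang (f t) x⟫ • tang (f t) x) :
    ∀ t ∈ Set.Ico (0:ℝ) T,
      HasDerivAt (fun s => WH lam ζ (f s))
        (-(∫ x in (0:ℝ)..1, ‖pT f t x‖ ^ 2 * ‖deriv (f t) x‖)) t ∧
      -(∫ x in (0:ℝ)..1, ‖pT f t x‖ ^ 2 * ‖deriv (f t) x‖) ≤ 0 :=
  energy_decreases_general n lam ζ fminus fplus T f hsmooth hreg hflow hbd₀ hbd₁ hnat

end
end

section
/- Let f : [0,T) × [0,1] → ℝⁿ be smooth with f(t,·) regular for each t, suppose ∂ₜf = V is purely normal on (0,T) × (0,1), and suppose the endpoints are fixed in time: f(t,0) and f(t,1) are constant in t. Define ψ¹ = ∇ₜf = ∂ₜf and inductively ψ^{i+1} = ∇ₜψ^i. Then for every ζ ∈ ℝⁿ, every i ∈ ℕ and every t ∈ (0,T), at each boundary point x ∈ {0,1}: (i) ∂ₜ⟨ζ, τ⟩ = ⟨ζ, ∇ₛψ¹⟩; (ii) ∇ₜ(⟨ζ, τ⟩τ) = ⟨ζ, τ⟩∇ₛψ¹; (iii) ∂ₜ⟨ζ, ∇ₛψⁱ⟩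 = ⟨ζ, ∇ₛψ^{i+1}⟩ − ⟨ζ, τ⟩⟨∇ₛψ¹, ∇ₛψⁱ⟩. -/
open scoped RealInnerProductSpace
open MeasureTheory

noncomputable section

variable {n : ℕ}

/-- Iterated normal time derivative `∇ₜⁱ f` (so `psiIter f 1 = ∇ₜ f`). -/
def psiIter (f : ℝ → ℝ → En n) : ℕ → ℝ → ℝ → En n
  | 0 => f
  | i + 1 => nT f (psiIter f i)

/-!
At an endpoint the velocity `V = ∂ₜf` vanishes for all times, so `∂ₜ∂ₓf = ∂ₓV` there, and
differentiating the normality `⟪V, ∂ₓf⟫ = 0` in space (up to the boundary, by continuity) gives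
`⟪∂ₓV, ∂ₓf⟫ = 0`. Hence the length element `|∂ₓf|` is stationary at the endpoint and
`∂ₜτ = |∂ₓf|⁻¹ ∂ₓV = ∇ₛψ¹`. Likewise every `ψⁱ` with `i ≥ 1` vanishes on the boundary line, so
`∂ₓψⁱ` is normal there and `∇ₛψⁱ = |∂ₓf|⁻¹ ∂ₓψⁱ`; the identities then follow from the product rule
and the symmetry of mixed partial derivatives.
-/

open Function Filter Set
open scoped Topology ContDiff

section Slices

variable {E : Type*} [NormedAddCommGroup E] [NormedSpace ℝ E]
  {G : ℝ → ℝ → E} {U : Set (ℝ × ℝ)} {s y : ℝ}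

theorem ContDiffOn.hasDerivAt_slice_left (hG : ContDiffOn ℝ ∞ (uncurry G) U) (hU : IsOpen U)
    (h : (s, y) ∈ U) :
    HasDerivAt (fun s' => G s' y) (fderiv ℝ (uncurry G) (s, y) (1, 0)) s :=
  ((hG.differentiableOn (by simp)).differentiableAt (hU.mem_nhds h)).hasFDerivAt.comp_hasDerivAt
    (f := fun s' => (s', y)) s ((hasDerivAt_id s).prodMk (hasDerivAt_const s y))

theorem ContDiffOn.hasDerivAt_slice_right (hG : ContDiffOn ℝ ∞ (uncurry G) U) (hU : IsOpen U)
    (h : (s, y) ∈ U) :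
    HasDerivAt (G s) (fderiv ℝ (uncurry G) (s, y) (0, 1)) y :=
  ((hG.differentiableOn (by simp)).differentiableAt (hU.mem_nhds h)).hasFDerivAt.comp_hasDerivAt
    (f := fun y' => (s, y')) y ((hasDerivAt_const y s).prodMk (hasDerivAt_id y))

theorem ContDiffOn.uncurry_deriv_left (hG : ContDiffOn ℝ ∞ (uncurry G) U) (hU : IsOpen U) :
    ContDiffOn ℝ ∞ (uncurry fun s y => deriv (fun s' => G s' y) s) U :=
  ((hG.fderiv_of_isOpen hU (m := ∞) (by simp)).clm_apply contDiffOn_const).congr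
    fun _ hp => (hG.hasDerivAt_slice_left hU hp).deriv

theorem ContDiffOn.uncurry_deriv_right (hG : ContDiffOn ℝ ∞ (uncurry G) U) (hU : IsOpen U) :
    ContDiffOn ℝ ∞ (uncurry fun s y => deriv (G s) y) U :=
  ((hG.fderiv_of_isOpen hU (m := ∞) (by simp)).clm_apply contDiffOn_const).congr
    fun _ hp => (hG.hasDerivAt_slice_right hU hp).deriv

theorem IsOpen.eventually_mem_slice_left (hU : IsOpen U) (h : (s, y) ∈ U) :
    ∀ᶠ s' in 𝓝 s, (s', y) ∈ U :=
  (continuous_id.prodMk continuous_const).continuousAt.preimage_mem_nhds (hU.mem_nhds h)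

theorem IsOpen.eventually_mem_slice_right (hU : IsOpen U) (h : (s, y) ∈ U) :
    ∀ᶠ y' in 𝓝 y, (s, y') ∈ U :=
  (continuous_const.prodMk continuous_id).continuousAt.preimage_mem_nhds (hU.mem_nhds h)

theorem ContDiffOn.deriv_slice_comm (hG : ContDiffOn ℝ ∞ (uncurry G) U) (hU : IsOpen U)
    (h : (s, y) ∈ U) :
    deriv (fun s' => deriv (G s') y) s = deriv (fun y' => deriv (fun s' => G s' y') s) y := by
  set D2 := fderiv ℝ (fderiv ℝ (uncurry G)) (s, y)
  have hD : HasFDerivAt (fderiv ℝ (uncurry G)) D2 (s, y) :=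
    (((hG.fderiv_of_isOpen hU (m := ∞) (by simp)).differentiableOn (by simp)).differentiableAt
      (hU.mem_nhds h)).hasFDerivAt
  have hleft : HasDerivAt (fun s' => deriv (G s') y) (D2 (1, 0) (0, 1)) s := by
    have := (hD.comp_hasDerivAt (f := fun s' => (s', y)) s
      ((hasDerivAt_id s).prodMk (hasDerivAt_const s y))).clm_apply
      (hasDerivAt_const s ((0 : ℝ), (1 : ℝ)))
    refine (by simpa using this : HasDerivAt _ _ s).congr_of_eventuallyEq ?_
    filter_upwards [hU.eventually_mem_slice_left h] with s' hs'
    exact (hG.hasDerivAt_slice_right hU hs').deriv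
  have hright : HasDerivAt (fun y' => deriv (fun s' => G s' y') s) (D2 (0, 1) (1, 0)) y := by
    have := (hD.comp_hasDerivAt (f := fun y' => (s, y')) y
      ((hasDerivAt_const y s).prodMk (hasDerivAt_id y))).clm_apply
      (hasDerivAt_const y ((1 : ℝ), (0 : ℝ)))
    refine (by simpa using this : HasDerivAt _ _ y).congr_of_eventuallyEq ?_
    filter_upwards [hU.eventually_mem_slice_right h] with y' hy'
    exact (hG.hasDerivAt_slice_left hU hy').deriv
  rw [hleft.deriv, hright.deriv]
  exact (hG.contDiffAt (hU.mem_nhds h)).isSymmSndFDerivAt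
    (by simpa using (WithTop.coe_le_coe.2 le_top : (2 : WithTop ℕ∞) ≤ ∞)) _ _

end Slices

theorem ContDiff.deriv_eq_zero_of_forall_mem_Ioo {E : Type*} [NormedAddCommGroup E]
    [NormedSpace ℝ E] {g : ℝ → E} {a b : ℝ} (hg : ContDiff ℝ 1 g) (hab : a < b)
    (h : ∀ y ∈ Ioo a b, g y = 0) : ∀ y ∈ Icc a b, deriv g y = 0 := by
  have hIoo : ∀ y ∈ Ioo a b, deriv g y = 0 := fun y hy =>
    ((eventuallyEq_of_mem (Ioo_mem_nhds hy.1 hy.2) h).deriv_eq).trans (deriv_const y 0)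
  rw [← closure_Ioo hab.ne]
  exact closure_minimal hIoo (isClosed_eq (hg.continuous_deriv le_rfl) continuous_const)

section Curves

variable {F : Type*} [NormedAddCommGroup F] [InnerProductSpace ℝ F]
  {u v : ℝ → F} {u' v' : F} {t : ℝ}

theorem HasDerivAt.inv_norm_of_inner_eq_zero (hu : HasDerivAt u u' t) (h0 : u t ≠ 0)
    (h : ⟪u t, u'⟫ = 0) : HasDerivAt (fun s => ‖u s‖⁻¹) 0 t := by
  have hsq : HasDerivAt (fun s => ‖u s‖ ^ 2) 0 t := by simpa [h] using hu.norm_sq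
  have hnorm : HasDerivAt (fun s => ‖u s‖) 0 t := by
    simpa [Real.sqrt_sq (norm_nonneg _)] using hsq.sqrt (by positivity)
  simpa using hnorm.fun_inv (norm_ne_zero_iff.mpr h0)

theorem HasDerivAt.sub_inner_smul_of_eq_zero (hu : HasDerivAt u u' t) (hv : HasDerivAt v v' t)
    (hu0 : u t = 0) :
    HasDerivAt (fun s => u s - ⟪u s, v s⟫ • v s) (u' - ⟪u', v t⟫ • v t) t := by
  simpa [hu0] using hu.fun_sub ((hu.inner ℝ hv).fun_smul hv)

theorem HasDerivAt.inner_add_inner_eq_zero (hu : HasDerivAt u u' t) (hv : HasDerivAt v v' t)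
    (h : ∀ᶠ s in 𝓝 t, ⟪u s, v s⟫ = 0) : ⟪u t, v'⟫ + ⟪u', v t⟫ = 0 :=
  (hu.inner ℝ hv).unique ((hasDerivAt_const t (0 : ℝ)).congr_of_eventuallyEq h)

theorem inner_sub_inner_smul_self_eq_zero {w τ : F} (hτ : ‖τ‖ = 1) : ⟪w - ⟪w, τ⟫ • τ, τ⟫ = 0 := by
  rw [inner_sub_left, real_inner_smul_left, real_inner_self_eq_norm_sq, hτ]
  ring

end Curves

section Tangent

variable {c g : ℝ → En n} {y : ℝ}

theorem norm_tang (h : deriv c y ≠ 0) : ‖tang c y‖ = 1 := by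
  simp [tang, aD, norm_smul, h]

theorem inner_deriv_eq_norm_mul_inner_tang (v : En n) :
    ⟪v, deriv c y⟫ = ‖deriv c y‖ * ⟪v, tang c y⟫ := by
  rcases eq_or_ne (deriv c y) 0 with h | h
  · simp [h]
  · simp [tang, aD, real_inner_smul_right, h]

theorem nS_eq_of_inner_eq_zero (h : ⟪deriv g y, tang c y⟫ = 0) :
    nS c g y = ‖deriv c y‖⁻¹ • deriv g y := by
  simp [nS, aD, real_inner_smul_left, h]

end Tangent

section Flow

variable {f g h : ℝ → ℝ → En n} {s t x y : ℝ}

def pX (g : ℝ → ℝ → En n) : ℝ → ℝ → En n := fun t x => deriv (g t) x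

def regSet (f : ℝ → ℝ → En n) : Set (ℝ × ℝ) := {p | pX f p.1 p.2 ≠ 0}

theorem ContDiffOn.hasDerivAt_pX_left {U : Set (ℝ × ℝ)} (hg : ContDiffOn ℝ ∞ (uncurry g) U)
    (hU : IsOpen U) (hp : (t, x) ∈ U) :
    HasDerivAt (fun s => pX g s x) (pX (pT g) t x) t := by
  have := ((hg.uncurry_deriv_right hU).hasDerivAt_slice_left hU hp).differentiableAt.hasDerivAt
  rwa [hg.deriv_slice_comm hU hp] at this

theorem isOpen_regSet (hf : ContDiff ℝ ∞ (uncurry f)) : IsOpen (regSet f) :=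
  isOpen_ne_fun (contDiffOn_univ.mp (hf.contDiffOn.uncurry_deriv_right isOpen_univ)).continuous
    continuous_const

theorem contDiffOn_tang (hf : ContDiff ℝ ∞ (uncurry f)) :
    ContDiffOn ℝ ∞ (uncurry fun s y => tang (f s) y) (regSet f) := by
  have hE : ContDiffOn ℝ ∞ (uncurry (pX f)) (regSet f) :=
    (hf.contDiffOn.uncurry_deriv_right isOpen_univ).mono (subset_univ _)
  exact ((hE.norm ℝ fun _ hp => hp).inv fun _ hp => norm_ne_zero_iff.mpr hp).smul hE

theorem ContDiffOn.nT (hg : ContDiffOn ℝ ∞ (uncurry g) (regSet f))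
    (hf : ContDiff ℝ ∞ (uncurry f)) : ContDiffOn ℝ ∞ (uncurry (nT f g)) (regSet f) := by
  have hpT := hg.uncurry_deriv_left (isOpen_regSet hf)
  exact hpT.sub ((hpT.inner ℝ (contDiffOn_tang hf)).smul (contDiffOn_tang hf))

theorem contDiffOn_psiIter (hf : ContDiff ℝ ∞ (uncurry f)) :
    ∀ i, ContDiffOn ℝ ∞ (uncurry (psiIter f i)) (regSet f)
  | 0 => hf.contDiffOn
  | i + 1 => (contDiffOn_psiIter hf i).nT hf

theorem nT_eq_zero_of_pT_eq_zero (hg : pT g s y = 0) : nT f g s y = 0 := by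
  simp [nT, hg]

theorem eventually_pT_eq_zero {c : En n} (hg : ∀ᶠ s in 𝓝 t, g s x = c) :
    ∀ᶠ s in 𝓝 t, pT g s x = 0 :=
  hg.eventually_nhds.mono fun s hs => (EventuallyEq.deriv_eq hs).trans (deriv_const s c)

theorem eventually_pT_psiIter_eq_zero {c : En n} (hfix : ∀ᶠ s in 𝓝 t, f s x = c) :
    ∀ i, ∀ᶠ s in 𝓝 t, pT (psiIter f i) s x = 0
  | 0 => eventually_pT_eq_zero hfix
  | i + 1 => eventually_pT_eq_zero
      ((eventually_pT_psiIter_eq_zero hfix i).mono fun _ hs => nT_eq_zero_of_pT_eq_zero hs)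

theorem hasDerivAt_nT_of_pT_eq_zero (hf : ContDiff ℝ ∞ (uncurry f))
    (hh : ContDiffOn ℝ ∞ (uncurry h) (regSet f)) (hreg : (t, x) ∈ regSet f)
    (hpT : pT h t x = 0) :
    HasDerivAt (nT f h t)
      (pX (pT h) t x - ⟪pX (pT h) t x, tang (f t) x⟫ • tang (f t) x) x := by
  have hU := isOpen_regSet hf
  exact ((hh.uncurry_deriv_left hU).hasDerivAt_slice_right hU hreg).differentiableAt.hasDerivAt
    |>.sub_inner_smul_of_eq_zero
      ((contDiffOn_tang hf).hasDerivAt_slice_right hU hreg).differentiableAt.hasDerivAt hpT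

theorem nSF_nT_of_pT_eq_zero (hf : ContDiff ℝ ∞ (uncurry f))
    (hh : ContDiffOn ℝ ∞ (uncurry h) (regSet f)) (hreg : (t, x) ∈ regSet f)
    (hpT : pT h t x = 0) :
    nSF f (nT f h) t x = ‖pX f t x‖⁻¹ •
      (pX (pT h) t x - ⟪pX (pT h) t x, tang (f t) x⟫ • tang (f t) x) := by
  have hd := (hasDerivAt_nT_of_pT_eq_zero hf hh hreg hpT).deriv
  rw [nSF, nS_eq_of_inner_eq_zero (hd ▸ inner_sub_inner_smul_self_eq_zero (norm_tang hreg)), hd]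
  rfl

end Flow

section Boundary

variable {f h : ℝ → ℝ → En n} {t x : ℝ}

/-- `⟪V, ∂ₓf⟫` vanishes on the open parameter interval, hence so does its spatial derivative up
to the endpoints; where `V = 0` this derivative is `⟪∂ₓV, ∂ₓf⟫`. -/
theorem inner_pX_pT_pX_eq_zero (hf : ContDiff ℝ ∞ (uncurry f))
    (hnormal : ∀ y ∈ Ioo (0 : ℝ) 1, ⟪pT f t y, tang (f t) y⟫ = 0) (hx : x ∈ Icc (0 : ℝ) 1)
    (hV : pT f t x = 0) : ⟪pX (pT f) t x, pX f t x⟫ = 0 := by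
  have hslice : ∀ {g : ℝ → ℝ → En n}, ContDiff ℝ ∞ (uncurry g) → ContDiff ℝ ∞ (g t) :=
    fun hg => hg.comp (contDiff_const.prodMk contDiff_id)
  have hV' := hslice (contDiffOn_univ.mp (hf.contDiffOn.uncurry_deriv_left isOpen_univ))
  have hE := hslice (contDiffOn_univ.mp (hf.contDiffOn.uncurry_deriv_right isOpen_univ))
  have hzero := (hV'.inner ℝ hE).of_le (by simp) |>.deriv_eq_zero_of_forall_mem_Ioo zero_lt_one
    (fun y hy => by
      rw [inner_deriv_eq_norm_mul_inner_tang]; exact mul_eq_zero_of_right _ (hnormal y hy)) x hx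
  have hd := (hV'.differentiable (by simp) x).hasDerivAt.inner ℝ
    (hE.differentiable (by simp) x).hasDerivAt
  rw [hd.deriv] at hzero
  change ⟪pT f t x, _⟫ + ⟪pX (pT f) t x, pX f t x⟫ = 0 at hzero
  simpa [hV] using hzero

theorem hasDerivAt_inv_norm_pX_left (hf : ContDiff ℝ ∞ (uncurry f)) (hreg : (t, x) ∈ regSet f)
    (hkey : ⟪pX (pT f) t x, pX f t x⟫ = 0) :
    HasDerivAt (fun s => ‖pX f s x‖⁻¹) 0 t :=
  (hf.contDiffOn.hasDerivAt_pX_left isOpen_univ (mem_univ _)).inv_norm_of_inner_eq_zero hreg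
    (by rwa [real_inner_comm])

theorem hasDerivAt_tang_left (hf : ContDiff ℝ ∞ (uncurry f)) (hreg : (t, x) ∈ regSet f)
    (hkey : ⟪pX (pT f) t x, pX f t x⟫ = 0) :
    HasDerivAt (fun s => tang (f s) x) (‖pX f t x‖⁻¹ • pX (pT f) t x) t := by
  have := (hasDerivAt_inv_norm_pX_left hf hreg hkey).fun_smul
    (hf.contDiffOn.hasDerivAt_pX_left isOpen_univ (mem_univ (t, x)))
  rwa [zero_smul, add_zero] at this

theorem inner_tang_eq_zero_of_inner_pX (hreg : (t, x) ∈ regSet f) {v : En n}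
    (hv : ⟪v, pX f t x⟫ = 0) : ⟪v, tang (f t) x⟫ = 0 := by
  rw [pX, inner_deriv_eq_norm_mul_inner_tang] at hv
  exact (mul_eq_zero.mp hv).resolve_left (norm_ne_zero_iff.mpr hreg)

theorem nSF_psiIter_one (hf : ContDiff ℝ ∞ (uncurry f)) (hreg : (t, x) ∈ regSet f)
    (hV : pT f t x = 0) (hkey : ⟪pX (pT f) t x, pX f t x⟫ = 0) :
    nSF f (psiIter f 1) t x = ‖pX f t x‖⁻¹ • pX (pT f) t x := by
  rw [psiIter, psiIter, nSF_nT_of_pT_eq_zero hf hf.contDiffOn hreg hV,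
    inner_tang_eq_zero_of_inner_pX hreg hkey, zero_smul, sub_zero]

theorem nT_inner_smul_tang (hf : ContDiff ℝ ∞ (uncurry f)) (hreg : (t, x) ∈ regSet f)
    (hkey : ⟪pX (pT f) t x, pX f t x⟫ = 0) (ζ : En n) :
    nT f (fun s y => ⟪ζ, tang (f s) y⟫ • tang (f s) y) t x
      = ⟪ζ, tang (f t) x⟫ • (‖pX f t x‖⁻¹ • pX (pT f) t x) := by
  have hT := hasDerivAt_tang_left hf hreg hkey
  have hWT : ⟪‖pX f t x‖⁻¹ • pX (pT f) t x, tang (f t) x⟫ = 0 :=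
    inner_tang_eq_zero_of_inner_pX hreg (by rw [real_inner_smul_left, hkey, mul_zero])
  have hTT : ⟪tang (f t) x, tang (f t) x⟫ = 1 := by
    rw [real_inner_self_eq_norm_sq, norm_tang hreg, one_pow]
  rw [nT, pT, (((hasDerivAt_const t ζ).inner ℝ hT).fun_smul hT).deriv]
  simp only [inner_zero_left, add_zero, inner_add_left, real_inner_smul_left, hWT, hTT]
  module

theorem hasDerivAt_inner_nSF_nT (hf : ContDiff ℝ ∞ (uncurry f))
    (hh : ContDiffOn ℝ ∞ (uncurry h) (regSet f)) (hpT : ∀ᶠ s in 𝓝 t, pT h s x = 0)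
    (hreg : (t, x) ∈ regSet f) (hkey : ⟪pX (pT f) t x, pX f t x⟫ = 0) (ζ : En n) :
    HasDerivAt (fun s => ⟪ζ, nSF f (nT f h) s x⟫)
      (⟪ζ, nSF f (nT f (nT f h)) t x⟫
        - ⟪ζ, tang (f t) x⟫ * ⟪‖pX f t x‖⁻¹ • pX (pT f) t x, nSF f (nT f h) t x⟫) t := by
  set g := nT f h
  have hU := isOpen_regSet hf
  have hg : ContDiffOn ℝ ∞ (uncurry g) (regSet f) := hh.nT hf
  have hgX : ∀ᶠ s in 𝓝 t, ⟪pX g s x, tang (f s) x⟫ = 0 := by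
    filter_upwards [hpT, hU.eventually_mem_slice_left hreg] with s hs hsU
    rw [pX, (hasDerivAt_nT_of_pT_eq_zero hf hh hsU hs).deriv]
    exact inner_sub_inner_smul_self_eq_zero (norm_tang hsU)
  have hnSF : ∀ᶠ s in 𝓝 t, nSF f g s x = ‖pX f s x‖⁻¹ • pX g s x :=
    hgX.mono fun s hs => nS_eq_of_inner_eq_zero hs
  have hgt : pT g t x = 0 :=
    (eventually_pT_eq_zero (hpT.mono fun _ hs => nT_eq_zero_of_pT_eq_zero hs)).self_of_nhds
  have hX := hg.hasDerivAt_pX_left hU hreg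
  -- differentiating `⟪∂ₓg, τ⟫ = 0` along the boundary trades `∂ₜτ` for `∂ₜ∂ₓg`
  have hPT := hX.inner_add_inner_eq_zero (hasDerivAt_tang_left hf hreg hkey) hgX
  have hd := (hasDerivAt_const t ζ).inner ℝ
    ((hasDerivAt_inv_norm_pX_left hf hreg hkey).fun_smul hX)
  refine (hd.congr_of_eventuallyEq (hnSF.mono fun s hs => by rw [hs])).congr_deriv ?_
  rw [nSF_nT_of_pT_eq_zero hf hg hreg hgt, hnSF.self_of_nhds]
  simp only [inner_zero_left, zero_smul, add_zero, inner_smul_right, inner_sub_right,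
    real_inner_smul_left] at hPT ⊢
  rw [real_inner_comm (pX (pT f) t x) (pX g t x)] at hPT
  linear_combination (‖pX f t x‖⁻¹ * ⟪ζ, tang (f t) x⟫) * hPT

end Boundary

theorem boundary_identities_general (n : ℕ)
    (T : ℝ)
    (f : ℝ → ℝ → En n)
    (hsmooth : ContDiff ℝ (⊤ : ℕ∞) (Function.uncurry f))
    (hreg : ∀ t ∈ Set.Ico (0:ℝ) T, ∀ x ∈ Set.Icc (0:ℝ) 1, deriv (f t) x ≠ 0)
    (hnormalflow : ∀ t ∈ Set.Ioo (0:ℝ) T, ∀ x ∈ Set.Ioo (0:ℝ) 1,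
      ⟪pT f t x, tang (f t) x⟫ = 0)
    (hbd₀ : ∀ t ∈ Set.Ico (0:ℝ) T, f t 0 = f 0 0)
    (hbd₁ : ∀ t ∈ Set.Ico (0:ℝ) T, f t 1 = f 0 1) :
    ∀ ζ : En n, ∀ t ∈ Set.Ioo (0:ℝ) T, ∀ x ∈ ({0, 1} : Set ℝ),
      (deriv (fun s => ⟪ζ, tang (f s) x⟫) t = ⟪ζ, nSF f (psiIter f 1) t x⟫) ∧
      (nT f (fun s y => ⟪ζ, tang (f s) y⟫ • tang (f s) y) t x
        = ⟪ζ, tang (f t) x⟫ • nSF f (psiIter f 1) t x) ∧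
      (∀ i : ℕ, 1 ≤ i →
        deriv (fun s => ⟪ζ, nSF f (psiIter f i) s x⟫) t
          = ⟪ζ, nSF f (psiIter f (i + 1)) t x⟫
            - ⟪ζ, tang (f t) x⟫ * ⟪nSF f (psiIter f 1) t x, nSF f (psiIter f i) t x⟫) := by
  intro ζ t ht x hx
  have hxI : x ∈ Icc (0 : ℝ) 1 := by rcases hx with rfl | rfl <;> simp
  have hreg' : (t, x) ∈ regSet f := hreg t ⟨ht.1.le, ht.2⟩ x hxI
  have hfix : ∀ᶠ s in 𝓝 t, f s x = f 0 x := by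
    filter_upwards [Ioo_mem_nhds ht.1 ht.2] with s hs
    rcases hx with rfl | rfl
    exacts [hbd₀ s ⟨hs.1.le, hs.2⟩, hbd₁ s ⟨hs.1.le, hs.2⟩]
  have hpT := eventually_pT_psiIter_eq_zero hfix
  have hkey := inner_pX_pT_pX_eq_zero hsmooth (hnormalflow t ht) hxI (hpT 0).self_of_nhds
  have hψ₁ := nSF_psiIter_one hsmooth hreg' (hpT 0).self_of_nhds hkey
  refine ⟨?_, by rw [hψ₁, nT_inner_smul_tang hsmooth hreg' hkey], fun i hi => ?_⟩
  · simpa [hψ₁] using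
      ((hasDerivAt_const t ζ).inner ℝ (hasDerivAt_tang_left hsmooth hreg' hkey)).deriv
  · obtain ⟨j, rfl⟩ := Nat.exists_eq_add_of_le' hi
    rw [hψ₁]
    exact (hasDerivAt_inner_nSF_nT hsmooth (contDiffOn_psiIter hsmooth j) (hpT j) hreg' hkey
      ζ).deriv

/-- Boundary identities for the fields `ψⁱ = ∇ₜⁱ f` along a purely normal flow with
fixed endpoints. -/
theorem boundary_identities (n : ℕ) (hn : 2 ≤ n)
    (T : ℝ) (hT : 0 < T)
    (f : ℝ → ℝ → En n)
    (hsmooth : ContDiff ℝ (⊤ : ℕ∞) (Function.uncurry f))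
    (hreg : ∀ t ∈ Set.Ico (0:ℝ) T, ∀ x ∈ Set.Icc (0:ℝ) 1, deriv (f t) x ≠ 0)
    (hnormalflow : ∀ t ∈ Set.Ioo (0:ℝ) T, ∀ x ∈ Set.Ioo (0:ℝ) 1,
      ⟪pT f t x, tang (f t) x⟫ = 0)
    (hbd₀ : ∀ t ∈ Set.Ico (0:ℝ) T, f t 0 = f 0 0)
    (hbd₁ : ∀ t ∈ Set.Ico (0:ℝ) T, f t 1 = f 0 1) :
    ∀ ζ : En n, ∀ t ∈ Set.Ioo (0:ℝ) T, ∀ x ∈ ({0, 1} : Set ℝ),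
      (deriv (fun s => ⟪ζ, tang (f s) x⟫) t = ⟪ζ, nSF f (psiIter f 1) t x⟫) ∧
      (nT f (fun s y => ⟪ζ, tang (f s) y⟫ • tang (f s) y) t x
        = ⟪ζ, tang (f t) x⟫ • nSF f (psiIter f 1) t x) ∧
      (∀ i : ℕ, 1 ≤ i →
        deriv (fun s => ⟪ζ, nSF f (psiIter f i) s x⟫) t
          = ⟪ζ, nSF f (psiIter f (i + 1)) t x⟫
            - ⟪ζ, tang (f t) x⟫ * ⟪nSF f (psiIter f 1) t x, nSF f (psiIter f i) t x⟫) :=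
  boundary_identities_general n T f hsmooth hreg hnormalflow hbd₀ hbd₁

end
end
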